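/- For every real z < 0, the Mills-type ratio satisfies the upper bound φ(z)/Φ(z) < (√(z²+4) − z)/2, where φ and Φ are the PDF and CDF of the standard normal distribution. -/

import Mathlib

/-! The Mills ratio `r = Φ / φ` solves `r' = 1 + t r`, because `φ' = -t φ`. Birnbaum's
function `h t = (√(t² + 4) + t) / 2`, the positive root of `h² = t h + 1`, has
`h' = h / √(t² + 4)` and is a strict subsolution: `h' < 1 + t h = h²`. Hence `(φ h)' < φ = Φ'`,
and as `φ h` and `Φ` both vanish at `-∞`, integrating gives `φ h < Φ`, i.e.
`φ / Φ < 1 / h = (√(z² + 4) - z) / 2`. -/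

open Real MeasureTheory

noncomputable def stdPhi (z : ℝ) : ℝ := (Real.sqrt (2 * Real.pi))⁻¹ * Real.exp (-z ^ 2 / 2)

noncomputable def stdCDF (z : ℝ) : ℝ := ∫ t in Set.Iic z, stdPhi t

open Set ProbabilityTheory

theorem lt_integral_Iic_of_hasDerivAt_lt {F f g : ℝ → ℝ} {a : ℝ}
    (hF : ∀ x ∈ Iic a, HasDerivAt F (f x) x) (hFi : IntegrableOn F (Iic a))
    (hfi : IntegrableOn f (Iic a)) (hgi : IntegrableOn g (Iic a))
    (hfg : ∀ x ∈ Iic a, f x < g x) :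
    F a < ∫ x in Iic a, g x := by
  have hFTC : ∫ x in Iic a, f x = F a := by
    simpa using integral_Iic_of_hasDerivAt_of_tendsto' hF hfi
      (tendsto_zero_of_hasDerivAt_of_integrableOn_Iic hF hfi hFi)
  have hpos : 0 < ∫ x in Iic a, (g - f) x := by
    have hsupp : Function.support (g - f) ∩ Iic a = Iic a :=
      inter_eq_right.2 fun x hx => (sub_pos.2 (hfg x hx)).ne'
    refine (setIntegral_pos_iff_support_of_nonneg_ae ?_ (hgi.sub hfi)).2 ?_
    · exact ae_restrict_of_forall_mem measurableSet_Iic fun x hx => (sub_pos.2 (hfg x hx)).le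
    · rw [hsupp, volume_Iic]
      exact ENNReal.zero_lt_top
  rw [integral_sub' hgi hfi, hFTC] at hpos
  linarith

theorem Continuous.integrableOn_Iic_of_abs_le {f g : ℝ → ℝ} {a : ℝ} (hf : Continuous f)
    (hg : IntegrableOn g (Iic a)) (hfg : ∀ x ∈ Iic a, |f x| ≤ g x) (b : ℝ) :
    IntegrableOn f (Iic b) := by
  have ha : IntegrableOn f (Iic a) :=
    hg.mono' hf.aestronglyMeasurable.restrict (ae_restrict_of_forall_mem measurableSet_Iic hfg)
  exact (ha.union hf.integrableOn_Icc).mono_set Iic_subset_Iic_union_Icc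

theorem stdPhi_eq_gaussianPDFReal : stdPhi = gaussianPDFReal 0 1 := by
  ext t
  simp [stdPhi, gaussianPDFReal]

theorem stdPhi_pos (t : ℝ) : 0 < stdPhi t := by
  rw [stdPhi_eq_gaussianPDFReal]
  exact gaussianPDFReal_pos 0 1 t one_ne_zero

theorem integrable_stdPhi : Integrable stdPhi := by
  rw [stdPhi_eq_gaussianPDFReal]
  exact integrable_gaussianPDFReal 0 1

theorem hasDerivAt_stdPhi (t : ℝ) : HasDerivAt stdPhi (-t * stdPhi t) t := by
  have hexp : HasDerivAt (fun t : ℝ => -t ^ 2 / 2) (-t) t :=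
    (((hasDerivAt_pow 2 t).neg).div_const 2).congr_deriv (by push_cast; ring)
  unfold stdPhi
  exact (hexp.exp.const_mul _).congr_deriv (by ring)

noncomputable def birnbaumBound (t : ℝ) : ℝ := (√(t ^ 2 + 4) + t) / 2

section BirnbaumBound

variable (t : ℝ)

theorem abs_lt_sqrt_sq_add_four : |t| < √(t ^ 2 + 4) :=
  (lt_sqrt (abs_nonneg t)).2 (by rw [sq_abs]; linarith)

theorem birnbaumBound_pos : 0 < birnbaumBound t := by
  have := abs_lt_sqrt_sq_add_four t
  rw [birnbaumBound]
  linarith [neg_abs_le t]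

theorem birnbaumBound_le_one {t : ℝ} (ht : t ≤ 0) : birnbaumBound t ≤ 1 := by
  have hs : √(t ^ 2 + 4) ≤ 2 - t :=
    (sqrt_le_left (by linarith)).2 (by nlinarith)
  rw [birnbaumBound]
  linarith

theorem birnbaumBound_sq : birnbaumBound t ^ 2 = t * birnbaumBound t + 1 := by
  have hs : √(t ^ 2 + 4) ^ 2 = t ^ 2 + 4 := sq_sqrt (by positivity)
  rw [birnbaumBound]
  linear_combination hs / 4

theorem inv_birnbaumBound : (birnbaumBound t)⁻¹ = (√(t ^ 2 + 4) - t) / 2 := by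
  have hs : √(t ^ 2 + 4) ^ 2 = t ^ 2 + 4 := sq_sqrt (by positivity)
  refine inv_eq_of_mul_eq_one_right ?_
  rw [birnbaumBound]
  linear_combination hs / 4

theorem hasDerivAt_birnbaumBound :
    HasDerivAt birnbaumBound (birnbaumBound t / √(t ^ 2 + 4)) t := by
  have hsq : HasDerivAt (fun t : ℝ => t ^ 2 + 4) (2 * t) t := by
    simpa using (hasDerivAt_pow 2 t).add_const 4
  have hs : √(t ^ 2 + 4) ≠ 0 := by positivity
  unfold birnbaumBound
  refine (((hsq.sqrt (by positivity)).add (hasDerivAt_id t)).div_const 2).congr_deriv ?_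
  field_simp
  ring

theorem birnbaumBound_div_sqrt_lt :
    birnbaumBound t / √(t ^ 2 + 4) < 1 + t * birnbaumBound t := by
  have hs : √(t ^ 2 + 4) ^ 2 = t ^ 2 + 4 := sq_sqrt (by positivity)
  have hst : 0 < √(t ^ 2 + 4) - t := by
    linarith [abs_lt_sqrt_sq_add_four t, le_abs_self t]
  have hhs : 1 < birnbaumBound t * √(t ^ 2 + 4) := by
    have : (birnbaumBound t * √(t ^ 2 + 4) - 1) * (√(t ^ 2 + 4) - t) = √(t ^ 2 + 4) + t := by
      rw [birnbaumBound]
      linear_combination √(t ^ 2 + 4) / 2 * hs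
    nlinarith [abs_lt_sqrt_sq_add_four t, neg_abs_le t]
  rw [div_lt_iff₀ (by positivity), add_comm, ← birnbaumBound_sq]
  nlinarith [birnbaumBound_pos t]

end BirnbaumBound

theorem stdPhi_mul_birnbaumBound_lt_stdCDF (z : ℝ) : stdPhi z * birnbaumBound z < stdCDF z := by
  set G' := fun t => stdPhi t * (birnbaumBound t / √(t ^ 2 + 4) - t * birnbaumBound t)
  have hG' : ∀ t, HasDerivAt (fun t => stdPhi t * birnbaumBound t) (G' t) t := fun t =>
    ((hasDerivAt_stdPhi t).mul (hasDerivAt_birnbaumBound t)).congr_deriv (by ring)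
  have hG'_lt : ∀ t, G' t < stdPhi t := fun t => by
    simpa using mul_lt_mul_of_pos_left
      (sub_lt_iff_lt_add.2 (birnbaumBound_div_sqrt_lt t)) (stdPhi_pos t)
  have hφ : IntegrableOn stdPhi (Iic 0) := integrable_stdPhi.integrableOn
  refine lt_integral_Iic_of_hasDerivAt_lt (fun t _ => hG' t) ?_ ?_
    integrable_stdPhi.integrableOn fun t _ => hG'_lt t
  · refine Continuous.integrableOn_Iic_of_abs_le (by unfold stdPhi birnbaumBound; fun_prop)
      hφ (fun t ht => ?_) z
    rw [abs_of_pos (mul_pos (stdPhi_pos t) (birnbaumBound_pos t))]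
    exact mul_le_of_le_one_right (stdPhi_pos t).le (birnbaumBound_le_one ht)
  · refine Continuous.integrableOn_Iic_of_abs_le ?_ hφ (fun t ht => ?_) z
    · unfold G' stdPhi birnbaumBound
      fun_prop (disch := exact fun x => by positivity)
    have hG'_nonneg : 0 ≤ G' t := by
      have hdiv : 0 < birnbaumBound t / √(t ^ 2 + 4) :=
        div_pos (birnbaumBound_pos t) (by positivity)
      have hmul : t * birnbaumBound t ≤ 0 :=
        mul_nonpos_of_nonpos_of_nonneg ht.out (birnbaumBound_pos t).le
      exact mul_nonneg (stdPhi_pos t).le (by linarith)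
    rw [abs_of_nonneg hG'_nonneg]
    exact (hG'_lt t).le

theorem mills_upper_bound_general (z : ℝ) :
    stdPhi z / stdCDF z < (Real.sqrt (z ^ 2 + 4) - z) / 2 := by
  have hφh : 0 < stdPhi z * birnbaumBound z := mul_pos (stdPhi_pos z) (birnbaumBound_pos z)
  calc stdPhi z / stdCDF z < stdPhi z / (stdPhi z * birnbaumBound z) :=
        div_lt_div_of_pos_left (stdPhi_pos z) hφh (stdPhi_mul_birnbaumBound_lt_stdCDF z)
    _ = (birnbaumBound z)⁻¹ := by field_simp [(stdPhi_pos z).ne']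
    _ = (Real.sqrt (z ^ 2 + 4) - z) / 2 := inv_birnbaumBound z

theorem mills_upper_bound (z : ℝ) (hz : z < 0) :
    stdPhi z / stdCDF z < (Real.sqrt (z ^ 2 + 4) - z) / 2 :=
  mills_upper_bound_general z
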